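/- arXiv:2211.10610 — 6 statements merged into one kernel-verified Lean document; each statement's English description precedes it below -/
import Mathlib

section
/- Let Φ : ℝ → ℝ be smooth and positive, M₀ > 0, and φ : I → ℝ a smooth solution of the cosmological equation φ'' + (1/M₀)√(φ'² + 2Φ∘φ)·φ' + Φ'∘φ = 0. Define ℋ_φ(t) = (1/M₀)√(φ'(t)² + 2Φ(φ(t))). Then for any t₁ < t₂ in I, ℋ_φ(t₁) − ℋ_φ(t₂) ≥ (φ(t₂) − φ(t₁))² / (M₀²·(t₂ − t₁)). -/
/-- The Hubble inequality: for a solution of the cosmological equation and `t₁ < t₂` in `I`,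
`ℋ_φ(t₁) − ℋ_φ(t₂) ≥ (φ(t₂) − φ(t₁))² / (M₀²(t₂ − t₁))`. -/
theorem stmt2 (Φ φ : ℝ → ℝ) (M₀ : ℝ) (I : Set ℝ)
    (hM : 0 < M₀) (hI : IsOpen I) (hIc : I.OrdConnected)
    (hΦ : ContDiff ℝ (⊤ : ℕ∞) Φ) (hΦpos : ∀ x, 0 < Φ x)
    (hφ : ContDiffOn ℝ (⊤ : ℕ∞) φ I)
    (heq : ∀ t ∈ I, deriv (deriv φ) t
        + (1 / M₀) * Real.sqrt ((deriv φ t) ^ 2 + 2 * Φ (φ t)) * deriv φ t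
        + deriv Φ (φ t) = 0) :
    ∀ t₁ ∈ I, ∀ t₂ ∈ I, t₁ < t₂ →
      (1 / M₀) * Real.sqrt ((deriv φ t₁) ^ 2 + 2 * Φ (φ t₁))
          - (1 / M₀) * Real.sqrt ((deriv φ t₂) ^ 2 + 2 * Φ (φ t₂))
        ≥ (φ t₂ - φ t₁) ^ 2 / (M₀ ^ 2 * (t₂ - t₁)) := by
  intro t₁ ht₁ t₂ ht₂ hlt
  have hM0 : M₀ ≠ 0 := hM.ne'
  have hsub : Set.Icc t₁ t₂ ⊆ I := hIc.out ht₁ ht₂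
  have hφ' : ContDiffOn ℝ (⊤ : ℕ∞) (deriv φ) I := hφ.deriv_of_isOpen hI (by simp)
  have hφd : ∀ t ∈ I, HasDerivAt φ (deriv φ t) t := fun t ht =>
    ((hφ.differentiableOn (by simp)).differentiableAt (hI.mem_nhds ht)).hasDerivAt
  have hφ'd : ∀ t ∈ I, HasDerivAt (deriv φ) (deriv (deriv φ) t) t := fun t ht =>
    ((hφ'.differentiableOn (by simp)).differentiableAt (hI.mem_nhds ht)).hasDerivAt
  have hΦd : ∀ x, HasDerivAt Φ (deriv Φ x) x := fun x =>
    (hΦ.differentiable (by simp) x).hasDerivAt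
  set g : ℝ → ℝ := fun t => (deriv φ t) ^ 2 + 2 * Φ (φ t) with hgdef
  have hgpos : ∀ t, 0 < g t := fun t => by
    have := hΦpos (φ t); have := sq_nonneg (deriv φ t); simp only [hgdef]; nlinarith
  have hsq : ∀ t, 0 < Real.sqrt (g t) := fun t => Real.sqrt_pos.2 (hgpos t)
  set H : ℝ → ℝ := fun t => (1 / M₀) * Real.sqrt (g t) with hHdef
  have hHd : ∀ t ∈ I, HasDerivAt H (-(deriv φ t) ^ 2 / M₀ ^ 2) t := by
    intro t ht
    have h1 : HasDerivAt g
        (2 * deriv φ t * deriv (deriv φ) t + 2 * (deriv Φ (φ t) * deriv φ t)) t := by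
      have hp : HasDerivAt (fun u => (deriv φ u) ^ 2)
          (2 * deriv φ t * deriv (deriv φ) t) t := by
        have := (hφ'd t ht).pow 2
        exact this.congr_deriv (by ring)
      have hc : HasDerivAt (fun u => 2 * Φ (φ u))
          (2 * (deriv Φ (φ t) * deriv φ t)) t :=
        (((hΦd (φ t)).comp t (hφd t ht))).const_mul 2
      exact hp.add hc
    have h2 := (h1.sqrt (hgpos t).ne').const_mul (1 / M₀)
    refine h2.congr_deriv ?_
    have heqt := heq t ht
    have hdd : deriv (deriv φ) t
        = -(1 / M₀) * Real.sqrt (g t) * deriv φ t - deriv Φ (φ t) := by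
      simp only [hgdef] at *; linarith
    rw [hdd]
    have hs := (hsq t).ne'
    field_simp
    ring
  set c : ℝ := (φ t₂ - φ t₁) / (t₂ - t₁) with hcdef
  set F : ℝ → ℝ := fun t => -H t - (1 / M₀ ^ 2) * (2 * c * φ t - c ^ 2 * t) with hFdef
  have hFd : ∀ t ∈ I, HasDerivAt F ((deriv φ t - c) ^ 2 / M₀ ^ 2) t := by
    intro t ht
    have h1 := ((hHd t ht).neg).sub
      ((((hφd t ht).const_mul (2 * c)).sub ((hasDerivAt_id t).const_mul (c ^ 2))).const_mul
        (1 / M₀ ^ 2))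
    refine h1.congr_deriv ?_
    field_simp
    ring
  have hmono : MonotoneOn F (Set.Icc t₁ t₂) := by
    apply monotoneOn_of_deriv_nonneg (convex_Icc t₁ t₂)
    · exact fun t ht => (hFd t (hsub ht)).continuousAt.continuousWithinAt
    · intro t ht
      rw [interior_Icc] at ht
      exact (hFd t (hsub (Set.Ioo_subset_Icc_self ht))).differentiableAt.differentiableWithinAt
    · intro t ht
      rw [interior_Icc] at ht
      rw [(hFd t (hsub (Set.Ioo_subset_Icc_self ht))).deriv]
      positivity
  have key := hmono (Set.left_mem_Icc.2 hlt.le) (Set.right_mem_Icc.2 hlt.le) hlt.le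
  simp only [hFdef] at key
  have ht21 : t₂ - t₁ > 0 := sub_pos.2 hlt
  have hrw : (φ t₂ - φ t₁) ^ 2 / (M₀ ^ 2 * (t₂ - t₁))
      = (1 / M₀ ^ 2) * (2 * c * (φ t₂ - φ t₁) - c ^ 2 * (t₂ - t₁)) := by
    simp only [hcdef]
    field_simp
    ring
  show H t₁ - H t₂ ≥ (φ t₂ - φ t₁) ^ 2 / (M₀ ^ 2 * (t₂ - t₁))
  rw [hrw]
  nlinarith [key]
end

section
/- Let Φ : ℝ → ℝ be smooth and positive, M₀ > 0, J an open interval, ζ ∈ {−1, 1}, and v : J → ℝ a smooth function with ζ·v(x) > 0 for all x. Define 𝔥(x) = (1/M₀)·√(v(x)² + 2Φ(x)). Then v satisfies the regular flow orbit equation v'(x) = −(1/M₀)√(v(x)² + 2Φ(x)) − Φ'(x)/v(x) on J if and only if 𝔥 satisfies the signed Hamilton–Jacobi equation 𝔥'(x) = (−ζ/M₀²)·√(M₀²𝔥(x)² − 2Φ(x)) on J; in that case moreover v(x) = −M₀²·𝔥'(x) for all x ∈ J. -/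
/-- Equivalence of the regular flow orbit equation for a speed function `v` of constant sign
`ζ` with the signed Hamilton–Jacobi equation for `𝔥(x) = (1/M₀)√(v(x)² + 2Φ(x))`, together
with the speed equation `v = −M₀²𝔥'`. -/
theorem stmt6 (Φ v : ℝ → ℝ) (M₀ ζ : ℝ) (J : Set ℝ)
    (hζ : ζ = 1 ∨ ζ = -1) (hM : 0 < M₀) (hJ : IsOpen J) (hJc : J.OrdConnected)
    (hΦ : ContDiff ℝ (⊤ : ℕ∞) Φ) (hΦpos : ∀ x, 0 < Φ x)
    (hv : ContDiffOn ℝ (⊤ : ℕ∞) v J) (hsign : ∀ x ∈ J, 0 < ζ * v x) :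
    ((∀ x ∈ J, deriv v x
          = -(1 / M₀) * Real.sqrt ((v x) ^ 2 + 2 * Φ x) - deriv Φ x / v x)
      ↔ (∀ x ∈ J, deriv (fun y => (1 / M₀) * Real.sqrt ((v y) ^ 2 + 2 * Φ y)) x
          = (-ζ / M₀ ^ 2) *
              Real.sqrt (M₀ ^ 2 * ((1 / M₀) * Real.sqrt ((v x) ^ 2 + 2 * Φ x)) ^ 2
                - 2 * Φ x)))
    ∧ ((∀ x ∈ J, deriv v x
          = -(1 / M₀) * Real.sqrt ((v x) ^ 2 + 2 * Φ x) - deriv Φ x / v x)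
        → ∀ x ∈ J,
            v x = -M₀ ^ 2 * deriv (fun y => (1 / M₀) * Real.sqrt ((v y) ^ 2 + 2 * Φ y)) x) := by
  have hM0 : (M₀ : ℝ) ≠ 0 := ne_of_gt hM
  have hupos : ∀ x, x ∈ J → 0 < (v x) ^ 2 + 2 * Φ x := fun x _ => by
    have := hΦpos x; positivity
  have hsqpos : ∀ x, x ∈ J → 0 < Real.sqrt ((v x) ^ 2 + 2 * Φ x) := fun x hx =>
    Real.sqrt_pos.mpr (hupos x hx)
  have hvne : ∀ x, x ∈ J → v x ≠ 0 := by
    intro x hx h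
    have := hsign x hx
    rw [h, mul_zero] at this
    exact lt_irrefl 0 this
  -- derivative computation
  have key : ∀ x ∈ J,
      deriv (fun y => (1 / M₀) * Real.sqrt ((v y) ^ 2 + 2 * Φ y)) x
        = (1 / M₀) * (v x * deriv v x + deriv Φ x) / Real.sqrt ((v x) ^ 2 + 2 * Φ x) := by
    intro x hx
    have hvd : HasDerivAt v (deriv v x) x := by
      have hdiff : DifferentiableAt ℝ v x :=
        ((hv.contDiffAt (hJ.mem_nhds hx)).differentiableAt (by simp))
      exact hdiff.hasDerivAt
    have hΦd : HasDerivAt Φ (deriv Φ x) x :=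
      (hΦ.differentiable (by simp)).differentiableAt.hasDerivAt
    have hg : HasDerivAt (fun y => (v y) ^ 2 + 2 * Φ y)
        (2 * v x * deriv v x + 2 * deriv Φ x) x := by
      have h1 : HasDerivAt (fun y => (v y) ^ 2) (2 * v x * deriv v x) x := by
        have := hvd.pow 2
        rw [show (fun y => v y ^ 2) = v ^ 2 from rfl]
        simpa [pow_one, mul_comm, mul_assoc, mul_left_comm] using this
      have h2 : HasDerivAt (fun y => 2 * Φ y) (2 * deriv Φ x) x := hΦd.const_mul 2
      exact h1.add h2
    have hs : HasDerivAt (fun y => Real.sqrt ((v y) ^ 2 + 2 * Φ y))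
        ((2 * v x * deriv v x + 2 * deriv Φ x) / (2 * Real.sqrt ((v x) ^ 2 + 2 * Φ x))) x :=
      hg.sqrt (ne_of_gt (hupos x hx))
    have htot := hs.const_mul (1 / M₀)
    rw [htot.deriv]
    have hsne := ne_of_gt (hsqpos x hx)
    field_simp
  -- the sqrt simplification
  have sqrt_eq : ∀ x ∈ J,
      Real.sqrt (M₀ ^ 2 * ((1 / M₀) * Real.sqrt ((v x) ^ 2 + 2 * Φ x)) ^ 2 - 2 * Φ x)
        = ζ * v x := by
    intro x hx
    have hsq : (Real.sqrt ((v x) ^ 2 + 2 * Φ x)) ^ 2 = (v x) ^ 2 + 2 * Φ x :=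
      Real.sq_sqrt (le_of_lt (hupos x hx))
    have harg : M₀ ^ 2 * ((1 / M₀) * Real.sqrt ((v x) ^ 2 + 2 * Φ x)) ^ 2 - 2 * Φ x
        = (v x) ^ 2 := by
      rw [mul_pow, hsq]; field_simp; ring
    rw [harg, Real.sqrt_sq_eq_abs]
    rcases hζ with h | h
    · subst h
      have := hsign x hx
      rw [one_mul] at this ⊢
      exact abs_of_pos this
    · subst h
      have := hsign x hx
      have hvneg : v x < 0 := by nlinarith
      rw [abs_of_neg hvneg]; ring
  have hζsq : ζ ^ 2 = 1 := by rcases hζ with h | h <;> subst h <;> norm_num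
  constructor
  · constructor
    · intro horb x hx
      rw [key x hx, sqrt_eq x hx, horb x hx]
      have hsne := ne_of_gt (hsqpos x hx)
      have hvn := hvne x hx
      field_simp
      linear_combination (v x * Real.sqrt ((v x) ^ 2 + 2 * Φ x)) * hζsq
    · intro hhj x hx
      have h := hhj x hx
      rw [key x hx, sqrt_eq x hx] at h
      have hsne := ne_of_gt (hsqpos x hx)
      have hvn := hvne x hx
      have hζ2 : ζ * ζ = 1 := by rcases hζ with h' | h' <;> subst h' <;> norm_num
      have h2 : (v x * deriv v x + deriv Φ x) * M₀
          = -(v x) * Real.sqrt ((v x) ^ 2 + 2 * Φ x) := by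
        field_simp at h
        apply mul_left_cancel₀ hM0
        linear_combination M₀ * h - (M₀ * v x * Real.sqrt ((v x) ^ 2 + 2 * Φ x)) * hζ2
      field_simp
      linear_combination h2
  · intro horb x hx
    rw [key x hx, horb x hx]
    have hsne := ne_of_gt (hsqpos x hx)
    have hvn := hvne x hx
    field_simp
    ring
end

section
/- Let Φ : ℝ → ℝ be smooth and positive, M₀ > 0, and let φ : I → ℝ be smooth with φ'(t) ≠ 0 everywhere, J = φ(I), and let V : J → ℝ be C¹ with V(φ(t)) = M₀·√(φ'(t)² + 2Φ(φ(t))) for all t (the Hamilton–Jacobi potential along φ). If φ satisfies the cosmological equation, then φ satisfies the gradient flow equation φ'(t) = −V'(φ(t)) for all t ∈ I. -/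
/-- A regular solution of the cosmological equation satisfies the gradient flow equation
`φ' = −V'∘φ` of its Hamilton–Jacobi potential `V`. -/
theorem stmt7 (Φ φ V : ℝ → ℝ) (M₀ : ℝ) (I : Set ℝ)
    (hM : 0 < M₀) (hI : IsOpen I) (hIc : I.OrdConnected)
    (hΦ : ContDiff ℝ (⊤ : ℕ∞) Φ) (hΦpos : ∀ x, 0 < Φ x)
    (hφ : ContDiffOn ℝ (⊤ : ℕ∞) φ I) (hreg : ∀ t ∈ I, deriv φ t ≠ 0)
    (hV : ContDiffOn ℝ 1 V (φ '' I))
    (hVφ : ∀ t ∈ I, V (φ t) = M₀ * Real.sqrt ((deriv φ t) ^ 2 + 2 * Φ (φ t)))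
    (heq : ∀ t ∈ I, deriv (deriv φ) t
        + (1 / M₀) * Real.sqrt ((deriv φ t) ^ 2 + 2 * Φ (φ t)) * deriv φ t
        + deriv Φ (φ t) = 0) :
    ∀ t ∈ I, deriv φ t = - derivWithin V (φ '' I) (φ t) := by
  intro t ht
  have htI : I ∈ nhds t := hI.mem_nhds ht
  set a := deriv φ t with ha
  set b := deriv (deriv φ) t with hb
  set c := deriv Φ (φ t) with hc
  set g : ℝ → ℝ := fun s => (deriv φ s) ^ 2 + 2 * Φ (φ s) with hgdef
  have hgpos : 0 < g t := by
    have := hΦpos (φ t)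
    have : (0:ℝ) ≤ a ^ 2 := sq_nonneg a
    simp only [hgdef]
    nlinarith [hΦpos (φ t), sq_nonneg a]
  set r := Real.sqrt (g t) with hr
  have hrpos : 0 < r := Real.sqrt_pos.mpr hgpos
  -- differentiability of φ and deriv φ at t
  have hdφ : HasDerivAt φ a t :=
    ((hφ.differentiableOn (by simp)).differentiableAt htI).hasDerivAt
  have hφ' : ContDiffOn ℝ (⊤ : ℕ∞) (deriv φ) I := hφ.deriv_of_isOpen hI (by simp)
  have hdφ' : HasDerivAt (deriv φ) b t :=
    ((hφ'.differentiableOn (by simp)).differentiableAt htI).hasDerivAt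
  have hdΦ : HasDerivAt Φ c (φ t) := (hΦ.differentiable (by simp) (φ t)).hasDerivAt
  -- derivative of g at t
  have hdg : HasDerivAt g (2 * a * b + 2 * (c * a)) t := by
    have h1 : HasDerivAt (fun s => (deriv φ s) ^ 2) (2 * a * b) t := by
      have := hdφ'.fun_pow 2
      simpa [mul_comm, mul_assoc, mul_left_comm] using this
    have h2 : HasDerivAt (fun s => 2 * Φ (φ s)) (2 * (c * a)) t := by
      have := (hdΦ.comp t hdφ).const_mul 2
      simpa using this
    simpa using h1.fun_add h2
  -- derivative of w = M₀ * sqrt (g ·)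
  have hdsqrt : HasDerivAt Real.sqrt (1 / (2 * r)) (g t) :=
    Real.hasDerivAt_sqrt (ne_of_gt hgpos)
  have hdw : HasDerivAt (fun s => M₀ * Real.sqrt (g s))
      (M₀ * (1 / (2 * r) * (2 * a * b + 2 * (c * a)))) t :=
    ((hdsqrt.comp t hdg)).const_mul M₀
  -- V ∘ φ has the same derivative since they agree near t
  have hev : (fun s => V (φ s)) =ᶠ[nhds t] (fun s => M₀ * Real.sqrt (g s)) :=
    Filter.eventually_of_mem htI (fun s hs => hVφ s hs)
  have hdVφ : HasDerivAt (fun s => V (φ s))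
      (M₀ * (1 / (2 * r) * (2 * a * b + 2 * (c * a)))) t :=
    hdw.congr_of_eventuallyEq hev
  -- chain rule for V within the image
  have hVd : HasDerivWithinAt V (derivWithin V (φ '' I) (φ t)) (φ '' I) (φ t) :=
    ((hV.differentiableOn one_ne_zero) (φ t) ⟨t, ht, rfl⟩).hasDerivWithinAt
  have hcomp : HasDerivWithinAt (fun s => V (φ s))
      (derivWithin V (φ '' I) (φ t) * a) I t :=
    hVd.comp t hdφ.hasDerivWithinAt (Set.mapsTo_image φ I)
  have hcomp' : HasDerivAt (fun s => V (φ s))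
      (derivWithin V (φ '' I) (φ t) * a) t := hcomp.hasDerivAt htI
  have hkey : derivWithin V (φ '' I) (φ t) * a
      = M₀ * (1 / (2 * r) * (2 * a * b + 2 * (c * a))) := hcomp'.unique hdVφ
  -- use the cosmological equation
  have heqt : b + (1 / M₀) * r * a + c = 0 := heq t ht
  have hM0 : M₀ ≠ 0 := ne_of_gt hM
  have hr0 : r ≠ 0 := ne_of_gt hrpos
  have ha0 : a ≠ 0 := hreg t ht
  have hbc : b + c = -(1 / M₀) * r * a := by linarith
  have : derivWithin V (φ '' I) (φ t) * a = -a * a := by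
    have hMbc : M₀ * (b + c) = -(r * a) := by
      rw [hbc]; field_simp
    rw [hkey]
    field_simp
    linear_combination hMbc
  have := mul_right_cancel₀ ha0 this
  linarith
end

section
/- Define the Hamilton–Jacobi polynomials Q_n ∈ ℚ[X₀,…,X_n] by Q₀ = 1 and the recursion Q_n = Σ_{k=1}^{n} Σ_{s₁+⋯+s_{2k}=n−k} a_k (D(2s₁−1)Q_{s₁})⋯(D(2s_{2k}−1)Q_{s_{2k}}), where a_k = C(1/2,k) and D(α)T = X₀·Σ_j X_{j+1} ∂T/∂X_j − α·X₁·T. Then for every n ≥ 0, Q_n is homogeneous of degree 2n with respect to the grading deg(X_k) = 1 for all k, and simultaneously homogeneous of degree 2n with respect to the grading wdeg(X_k) = k. -/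
open MvPolynomial

/-- The derivation `T ↦ T' = Σ_j X_{j+1} ∂T/∂X_j` on `ℚ[X₀, X₁, …]`. -/
noncomputable def primeDeriv (T : MvPolynomial ℕ ℚ) : MvPolynomial ℕ ℚ :=
  ∑ j ∈ T.vars, X (j + 1) * pderiv j T

/-- The operator `D(α)T = X₀·T' − α·X₁·T`. -/
noncomputable def Dop (α : ℚ) (T : MvPolynomial ℕ ℚ) : MvPolynomial ℕ ℚ :=
  X 0 * primeDeriv T - C α * (X 1 * T)

/-- The generalized binomial coefficient `a_k = C(1/2, k)`. -/
noncomputable def genBinom (k : ℕ) : ℚ :=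
  (∏ i ∈ Finset.range k, ((1 : ℚ) / 2 - (i : ℚ))) / (Nat.factorial k : ℚ)

/-!
Both gradings are instances of a weight `w : ℕ → ℕ` with `w (j + 1) = w j + e` and
`w 0 + e = 1`: take `(w, e) = (1, 0)` for the degree and `(id, 1)` for the weighted degree.
For such a weight `T ↦ T'` raises the weight by `e`, so `D(α)` raises it by `1`. In the
recursion for `Q_n` each of the `2k` factors `D(2sᵢ - 1) Q_{sᵢ}` then has weight `2sᵢ + 1`,
and these add up to `2(n - k) + 2k = 2n`.
-/

namespace MvPolynomial

variable {σ R : Type*} [CommSemiring R] {w : σ → ℕ} {φ : MvPolynomial σ R} {n : ℕ}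

theorem IsWeightedHomogeneous.le_of_mem_vars (hφ : φ.IsWeightedHomogeneous w n) {j : σ}
    (hj : j ∈ φ.vars) : w j ≤ n := by
  obtain ⟨d, hd, hjd⟩ := (mem_vars_iff_mem_support j).1 hj
  rw [← hφ (mem_support_iff.1 hd)]
  exact Finsupp.le_weight_of_ne_zero' w (Finsupp.mem_support_iff.1 hjd)

theorem IsWeightedHomogeneous.X_mul_pderiv (hφ : φ.IsWeightedHomogeneous w n) {i j : σ}
    (hj : j ∈ φ.vars) {e : ℕ} (hij : w i = w j + e) :
    (X i * pderiv j φ).IsWeightedHomogeneous w (n + e) := by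
  have hwj := hφ.le_of_mem_vars hj
  convert (isWeightedHomogeneous_X R w i).mul (hφ.pderiv (Nat.sub_add_cancel hwj)) using 1
  omega

end MvPolynomial

section ShiftWeight

variable {w : ℕ → ℕ} {e : ℕ} {T : MvPolynomial ℕ ℚ} {n : ℕ}

theorem isWeightedHomogeneous_primeDeriv (hw : ∀ j, w (j + 1) = w j + e)
    (hT : T.IsWeightedHomogeneous w n) : (primeDeriv T).IsWeightedHomogeneous w (n + e) :=
  IsWeightedHomogeneous.sum _ _ _ fun j hj => hT.X_mul_pderiv hj (hw j)

theorem isWeightedHomogeneous_Dop (hw : ∀ j, w (j + 1) = w j + e) (hw₀ : w 0 + e = 1)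
    (hT : T.IsWeightedHomogeneous w n) (α : ℚ) : (Dop α T).IsWeightedHomogeneous w (n + 1) := by
  have hX₀T' : (X 0 * primeDeriv T).IsWeightedHomogeneous w (n + 1) := by
    convert (isWeightedHomogeneous_X ℚ w 0).mul (isWeightedHomogeneous_primeDeriv hw hT) using 1
    omega
  have hX₁T : (C α * (X 1 * T)).IsWeightedHomogeneous w (n + 1) := by
    convert (isWeightedHomogeneous_C w α).mul ((isWeightedHomogeneous_X ℚ w 1).mul hT) using 1
    rw [hw 0]
    omega
  rw [← mem_weightedHomogeneousSubmodule] at hX₀T' hX₁T ⊢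
  exact sub_mem hX₀T' hX₁T

theorem isWeightedHomogeneous_prod_Dop (hw : ∀ j, w (j + 1) = w j + e) (hw₀ : w 0 + e = 1)
    {Q : ℕ → MvPolynomial ℕ ℚ} {k : ℕ} {s : Fin k → ℕ}
    (hQ : ∀ i, (Q (s i)).IsWeightedHomogeneous w (2 * s i)) (α : Fin k → ℚ) :
    (∏ i, Dop (α i) (Q (s i))).IsWeightedHomogeneous w (2 * ∑ i, s i + k) := by
  have hsum : 2 * ∑ i, s i + k = ∑ i, (2 * s i + 1) := by
    simp [Finset.sum_add_distrib, Finset.mul_sum]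
  rw [hsum]
  exact IsWeightedHomogeneous.prod _ _ _ fun i _ => isWeightedHomogeneous_Dop hw hw₀ (hQ i) (α i)

theorem isWeightedHomogeneous_of_hamiltonJacobi (hw : ∀ j, w (j + 1) = w j + e)
    (hw₀ : w 0 + e = 1) (Q : ℕ → MvPolynomial ℕ ℚ) (hQ0 : Q 0 = 1)
    (hQrec : ∀ n : ℕ, 1 ≤ n → Q n =
      ∑ k ∈ Finset.Icc 1 n, ∑ s ∈ Finset.Nat.antidiagonalTuple (2 * k) (n - k),
        C (genBinom k) * ∏ i, Dop (2 * (s i : ℚ) - 1) (Q (s i))) (n : ℕ) :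
    (Q n).IsWeightedHomogeneous w (2 * n) := by
  induction n using Nat.strong_induction_on with
  | _ n ih =>
  rcases Nat.eq_zero_or_pos n with rfl | hn
  · simpa [hQ0] using isWeightedHomogeneous_one ℚ w
  rw [hQrec n hn]
  refine IsWeightedHomogeneous.sum _ _ _ fun k hk => IsWeightedHomogeneous.sum _ _ _ fun s hs => ?_
  obtain ⟨hk₁, hkn⟩ := Finset.mem_Icc.1 hk
  have hs : ∑ i, s i = n - k := Finset.Nat.mem_antidiagonalTuple.1 hs
  have hsi_lt (i : Fin (2 * k)) : s i < n := by
    have := hs ▸ Finset.single_le_sum (fun j _ => Nat.zero_le (s j)) (Finset.mem_univ i)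
    omega
  have hprod := isWeightedHomogeneous_prod_Dop hw hw₀ (fun i => ih _ (hsi_lt i))
    (fun i => 2 * (s i : ℚ) - 1)
  rw [hs, show 2 * (n - k) + 2 * k = 2 * n by omega] at hprod
  simpa using (isWeightedHomogeneous_C w (genBinom k)).mul hprod

end ShiftWeight

/-- The Hamilton–Jacobi polynomials `Q_n` are bihomogeneous of bidegree `(2n, 2n)`:
homogeneous of degree `2n` for `deg X_k = 1` and of weighted degree `2n` for `wdeg X_k = k`. -/
theorem stmt10 (Q : ℕ → MvPolynomial ℕ ℚ) (hQ0 : Q 0 = 1)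
    (hQrec : ∀ n : ℕ, 1 ≤ n → Q n =
      ∑ k ∈ Finset.Icc 1 n, ∑ s ∈ Finset.Nat.antidiagonalTuple (2 * k) (n - k),
        C (genBinom k) * ∏ i, Dop (2 * (s i : ℚ) - 1) (Q (s i))) :
    ∀ n : ℕ, (Q n).IsHomogeneous (2 * n)
      ∧ (Q n).IsWeightedHomogeneous (fun k => k) (2 * n) := fun n =>
  ⟨isWeightedHomogeneous_of_hamiltonJacobi (w := 1) (e := 0) (fun _ => rfl) rfl Q hQ0 hQrec n,
    isWeightedHomogeneous_of_hamiltonJacobi (w := fun k => k) (e := 1) (fun _ => rfl) rfl Q hQ0 hQrec n⟩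
end

section
/- With Q_n the Hamilton–Jacobi polynomials defined by Q₀ = 1 and Q_n = Σ_{k=1}^{n} Σ_{s₁+⋯+s_{2k}=n−k} a_k ∏_{i=1}^{2k} D(2s_i−1)Q_{s_i}: for every n ≥ 1, every monomial X₀^{k₀}X₁^{k₁}⋯X_n^{k_n} occurring in Q_n with nonzero coefficient satisfies k₀ < n (equivalently k₁+⋯+k_n > n). -/
open MvPolynomial

/-!
Each operator `D(α)` raises the `X₀`-degree by at most one, since `T ↦ T'` never creates an
`X₀`, and `D(α)1 = -αX₁` has `X₀`-degree `0`. So the factor `D(2sᵢ-1)Q_{sᵢ}` of a summand of the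
recursion has `X₀`-degree at most `sᵢ` (by induction for `sᵢ ≥ 1`), and the summand at most
`s₁ + ⋯ + s_{2k} = n - k ≤ n - 1`.
-/

theorem MvPolynomial.degreeOf_pderiv_le {R σ : Type*} [CommSemiring R] (i j : σ)
    (p : MvPolynomial σ R) : degreeOf i (pderiv j p) ≤ degreeOf i p := by
  refine degreeOf_le_iff.2 fun m hm => ?_
  have hm' : m + Finsupp.single j 1 ∈ p.support := by
    rw [mem_support_iff, coeff_pderiv] at hm
    exact mem_support_iff.2 (left_ne_zero_of_mul hm)
  calc m i ≤ (m + Finsupp.single j 1 : σ →₀ ℕ) i := by simp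
    _ ≤ degreeOf i p := monomial_le_degreeOf i hm'

theorem degreeOf_zero_primeDeriv_le (T : MvPolynomial ℕ ℚ) :
    degreeOf 0 (primeDeriv T) ≤ degreeOf 0 T := by
  refine (degreeOf_sum_le _ _ _).trans (Finset.sup_le fun j _ => ?_)
  rw [mul_comm, degreeOf_mul_X_of_ne _ (Nat.succ_ne_zero j).symm]
  exact degreeOf_pderiv_le 0 j T

theorem degreeOf_zero_Dop_le (α : ℚ) (T : MvPolynomial ℕ ℚ) :
    degreeOf 0 (Dop α T) ≤ degreeOf 0 T + 1 := by
  rw [Dop, sub_eq_add_neg]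
  refine (degreeOf_add_le _ _ _).trans (max_le ?_ ?_)
  · rw [mul_comm]
    exact (degreeOf_mul_X_self 0 _).trans (by gcongr; exact degreeOf_zero_primeDeriv_le T)
  · rw [degreeOf_neg, mul_left_comm, mul_comm, degreeOf_mul_X_of_ne _ zero_ne_one]
    exact (degreeOf_C_mul_le _ _ _).trans (Nat.le_succ _)

theorem Dop_one (α : ℚ) : Dop α 1 = -(C α * X 1) := by
  simp [Dop, primeDeriv]

theorem degreeOf_zero_Dop_one (α : ℚ) : degreeOf 0 (Dop α 1) = 0 := by
  rw [Dop_one, degreeOf_neg, degreeOf_mul_X_of_ne _ zero_ne_one, degreeOf_C]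

theorem degreeOf_zero_Dop_le_of_eq_one_or_lt {T : MvPolynomial ℕ ℚ} {s : ℕ}
    (hT : T = 1 ∨ degreeOf 0 T < s) (α : ℚ) : degreeOf 0 (Dop α T) ≤ s := by
  rcases hT with rfl | hlt
  · simp [degreeOf_zero_Dop_one]
  · exact (degreeOf_zero_Dop_le α T).trans hlt

/-- For `n ≥ 1`, every monomial `X₀^{k₀}X₁^{k₁}⋯X_n^{k_n}` occurring in the Hamilton–Jacobi
polynomial `Q_n` with nonzero coefficient satisfies `k₀ < n`. -/
theorem stmt11 (Q : ℕ → MvPolynomial ℕ ℚ) (hQ0 : Q 0 = 1)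
    (hQrec : ∀ n : ℕ, 1 ≤ n → Q n =
      ∑ k ∈ Finset.Icc 1 n, ∑ s ∈ Finset.Nat.antidiagonalTuple (2 * k) (n - k),
        C (genBinom k) * ∏ i, Dop (2 * (s i : ℚ) - 1) (Q (s i))) :
    ∀ n : ℕ, 1 ≤ n → ∀ d ∈ (Q n).support, d 0 < n := by
  have key : ∀ n, 1 ≤ n → degreeOf 0 (Q n) < n := by
    intro n
    induction n using Nat.strong_induction_on with
    | _ n ih =>
      intro hn
      rw [hQrec n hn]
      refine (degreeOf_sum_le _ _ _).trans_lt ((Finset.sup_lt_iff hn).2 fun k hk => ?_)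
      refine (degreeOf_sum_le _ _ _).trans_lt ((Finset.sup_lt_iff hn).2 fun s hs => ?_)
      rw [Finset.mem_Icc] at hk
      rw [Finset.Nat.mem_antidiagonalTuple] at hs
      have hfactor (i : Fin (2 * k)) : degreeOf 0 (Dop (2 * (s i : ℚ) - 1) (Q (s i))) ≤ s i := by
        refine degreeOf_zero_Dop_le_of_eq_one_or_lt ?_ _
        rcases Nat.eq_zero_or_pos (s i) with h0 | hpos
        · exact .inl (h0 ▸ hQ0)
        · have hle : s i ≤ n - k := hs ▸ Finset.single_le_sum (fun _ _ => Nat.zero_le _)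
            (Finset.mem_univ i)
          exact .inr (ih (s i) (by omega) hpos)
      calc degreeOf 0 (C (genBinom k) * ∏ i, Dop (2 * (s i : ℚ) - 1) (Q (s i)))
          ≤ ∑ i, degreeOf 0 (Dop (2 * (s i : ℚ) - 1) (Q (s i))) :=
            (degreeOf_C_mul_le _ _ _).trans (degreeOf_prod_le _ _ _)
        _ ≤ ∑ i, s i := Finset.sum_le_sum fun i _ => hfactor i
        _ < n := by omega
  intro n hn d hd
  exact (degreeOf_lt_iff hn).1 (key n hn) d hd
end

section
/- Let Φ : ℝ → ℝ be smooth and positive and M₀ > 0, and set u₀ = √(2Φ)/M₀. Let u_n be defined by the recursion u_n = Σ_{k=1}^{n} Σ_{s₁+⋯+s_{2k}=n−k} a_k M₀^{2k} u_{s₁}'⋯u_{s_{2k}}'/u₀^{2k−1}. Then for each n ≥ 0 and each x: u_n(x) = M₀^{2n} Q_n(u₀(x), u₀'(x), …, u₀^{(n)}(x)) / u₀(x)^{2n−1} and u_n'(x) = M₀^{2n} (D(2n−1)Q_n)(u₀(x), …, u₀^{(n+1)}(x)) / u₀(x)^{2n}, where Q_n are the Hamilton–Jacobi polynomials. -/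
open MvPolynomial
open scoped ContDiff

/-- The derivation `T ↦ T' = Σ_j X_{j+1} ∂T/∂X_j` on `ℝ[X₀, X₁, …]`. -/
noncomputable def primeDerivR (T : MvPolynomial ℕ ℝ) : MvPolynomial ℕ ℝ :=
  ∑ j ∈ T.vars, X (j + 1) * pderiv j T

/-- The operator `D(α)T = X₀·T' − α·X₁·T`. -/
noncomputable def DopR (α : ℝ) (T : MvPolynomial ℕ ℝ) : MvPolynomial ℕ ℝ :=
  X 0 * primeDerivR T - C α * (X 1 * T)

/-- The generalized binomial coefficient `a_k = C(1/2, k)`. -/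
noncomputable def genBinomR (k : ℕ) : ℝ :=
  (∏ i ∈ Finset.range k, ((1 : ℝ) / 2 - (i : ℝ))) / (Nat.factorial k : ℝ)

lemma primeDerivR_eq_sum {T : MvPolynomial ℕ ℝ} {S : Finset ℕ} (h : T.vars ⊆ S) :
    primeDerivR T = ∑ j ∈ S, X (j + 1) * pderiv j T := by
  unfold primeDerivR
  exact Finset.sum_subset h fun j _ hj => by
    rw [pderiv_eq_zero_of_notMem_vars hj, mul_zero]

lemma primeDerivR_C (a : ℝ) : primeDerivR (C a) = 0 := by
  simp [primeDerivR, vars_C]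

lemma primeDerivR_one : primeDerivR (1 : MvPolynomial ℕ ℝ) = 0 := by
  simpa using primeDerivR_C 1

lemma primeDerivR_X (i : ℕ) : primeDerivR (X i : MvPolynomial ℕ ℝ) = X (i + 1) := by
  simp [primeDerivR, vars_X]

lemma primeDerivR_add (p q : MvPolynomial ℕ ℝ) :
    primeDerivR (p + q) = primeDerivR p + primeDerivR q := by
  classical
  set S := p.vars ∪ q.vars ∪ (p + q).vars with hS
  rw [primeDerivR_eq_sum (T := p + q) (S := S) (by intro j hj; simp [hS, hj]),
      primeDerivR_eq_sum (T := p) (S := S) (by intro j hj; simp [hS, hj]),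
      primeDerivR_eq_sum (T := q) (S := S) (by intro j hj; simp [hS, hj]),
      ← Finset.sum_add_distrib]
  refine Finset.sum_congr rfl fun j _ => ?_
  rw [map_add, mul_add]

lemma primeDerivR_mul (p q : MvPolynomial ℕ ℝ) :
    primeDerivR (p * q) = p * primeDerivR q + primeDerivR p * q := by
  classical
  set S := p.vars ∪ q.vars ∪ (p * q).vars with hS
  rw [primeDerivR_eq_sum (T := p * q) (S := S) (by intro j hj; simp [hS, hj]),
      primeDerivR_eq_sum (T := p) (S := S) (by intro j hj; simp [hS, hj]),
      primeDerivR_eq_sum (T := q) (S := S) (by intro j hj; simp [hS, hj]),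
      Finset.mul_sum, Finset.sum_mul, ← Finset.sum_add_distrib]
  refine Finset.sum_congr rfl fun j _ => ?_
  rw [pderiv_mul]
  ring

lemma eval_DopR (α : ℝ) (T : MvPolynomial ℕ ℝ) (g : ℕ → ℝ) :
    eval g (DopR α T) = g 0 * eval g (primeDerivR T) - α * (g 1 * eval g T) := by
  simp [DopR]

lemma hasDerivAt_iteratedDeriv {f : ℝ → ℝ} (hf : ContDiff ℝ ∞ f) (i : ℕ) (x : ℝ) :
    HasDerivAt (iteratedDeriv i f) (iteratedDeriv (i + 1) f x) x := by
  have h1 : ContDiff ℝ ∞ (iteratedDeriv i f) := by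
    rw [iteratedDeriv_eq_iterate]; exact ContDiff.iterate_deriv i hf
  rw [iteratedDeriv_succ]
  exact ((h1.differentiable (by simp)) x).hasDerivAt

lemma hasDerivAt_eval_jet {f : ℝ → ℝ} (hf : ContDiff ℝ ∞ f) (T : MvPolynomial ℕ ℝ) (x : ℝ) :
    HasDerivAt (fun y => eval (fun j => iteratedDeriv j f y) T)
      (eval (fun j => iteratedDeriv j f x) (primeDerivR T)) x := by
  induction T using MvPolynomial.induction_on with
  | C a => simpa [primeDerivR_C] using hasDerivAt_const x a
  | add p q hp hq => simpa [primeDerivR_add] using hp.fun_add hq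
  | mul_X p i hp =>
      have h := hp.fun_mul (hasDerivAt_iteratedDeriv hf i x)
      have hfun : (fun y => eval (fun j => iteratedDeriv j f y) (p * X i))
          = fun y => eval (fun j => iteratedDeriv j f y) p * iteratedDeriv i f y := by
        funext y; simp
      rw [hfun]
      refine h.congr_deriv ?_
      simp only [primeDerivR_mul, primeDerivR_X, map_add, eval_mul, eval_X]
      ring

/-- The coefficients `u_n` of the IR expansion are given by evaluating the Hamilton–Jacobi
polynomials on the jets of `u₀ = √(2Φ)/M₀`:
`u_n = M₀^{2n} Q_n(u₀, u₀', …, u₀^{(n)})/u₀^{2n−1}` and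
`u_n' = M₀^{2n} (D(2n−1)Q_n)(u₀, …, u₀^{(n+1)})/u₀^{2n}`. -/
theorem stmt19 (Φ : ℝ → ℝ) (M₀ : ℝ) (hM : 0 < M₀)
    (hΦ : ContDiff ℝ (⊤ : ℕ∞) Φ) (hΦpos : ∀ x, 0 < Φ x)
    (u : ℕ → ℝ → ℝ)
    (hu0 : u 0 = fun x => Real.sqrt (2 * Φ x) / M₀)
    (hurec : ∀ n : ℕ, 1 ≤ n → ∀ x : ℝ, u n x =
      ∑ k ∈ Finset.Icc 1 n, ∑ s ∈ Finset.Nat.antidiagonalTuple (2 * k) (n - k),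
        genBinomR k * M₀ ^ (2 * k) * (∏ i, deriv (u (s i)) x) / (u 0 x) ^ (2 * k - 1))
    (Q : ℕ → MvPolynomial ℕ ℝ) (hQ0 : Q 0 = 1)
    (hQrec : ∀ n : ℕ, 1 ≤ n → Q n =
      ∑ k ∈ Finset.Icc 1 n, ∑ s ∈ Finset.Nat.antidiagonalTuple (2 * k) (n - k),
        C (genBinomR k) * ∏ i, DopR (2 * (s i : ℝ) - 1) (Q (s i))) :
    ∀ (n : ℕ) (x : ℝ),
      u n x = M₀ ^ (2 * n)
          * MvPolynomial.eval (fun j => iteratedDeriv j (u 0) x) (Q n)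
          / (u 0 x) ^ (2 * (n : ℤ) - 1)
      ∧ deriv (u n) x = M₀ ^ (2 * n)
          * MvPolynomial.eval (fun j => iteratedDeriv j (u 0) x)
              (DopR (2 * (n : ℝ) - 1) (Q n))
          / (u 0 x) ^ (2 * (n : ℤ)) := by
  have hvpos : ∀ x, 0 < u 0 x := by
    intro x; rw [hu0]
    exact div_pos (Real.sqrt_pos.mpr (by linarith [hΦpos x])) hM
  have hvne : ∀ x, u 0 x ≠ 0 := fun x => (hvpos x).ne'
  have hsmooth : ContDiff ℝ ∞ (u 0) := by
    rw [hu0]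
    have h2 : ContDiff ℝ ∞ (fun x => 2 * Φ x) := contDiff_const.mul (hΦ.of_le (by simp))
    exact (contDiff_iff_contDiffAt.mpr fun x =>
      (h2.contDiffAt.sqrt (by linarith [hΦpos x] : (2:ℝ) * Φ x ≠ 0))).div_const M₀
  set J : ℝ → ℕ → ℝ := fun x j => iteratedDeriv j (u 0) x with hJdef
  have hE : ∀ (T : MvPolynomial ℕ ℝ) (x : ℝ),
      HasDerivAt (fun y => eval (J y) T) (eval (J x) (primeDerivR T)) x :=
    fun T x => hasDerivAt_eval_jet hsmooth T x
  have hd1 : ∀ x, HasDerivAt (u 0) (J x 1) x := by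
    intro x
    have h := hasDerivAt_iteratedDeriv hsmooth 0 x
    simpa [hJdef, iteratedDeriv_zero] using h
  have hJ0 : ∀ x, J x 0 = u 0 x := fun x => by simp [hJdef]
  intro n
  induction n using Nat.strong_induction_on with
  | _ n IH =>
  rcases Nat.eq_zero_or_pos n with rfl | hn
  · -- base case n = 0
    intro x
    constructor
    · simp only [hQ0, map_one, Nat.cast_zero, mul_zero, pow_zero, one_mul, zero_sub]
      rw [zpow_neg, zpow_one, one_div, inv_inv]
    · have hD : DopR (2 * ((0:ℕ) : ℝ) - 1) (Q 0) = X 1 := by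
        rw [hQ0]
        simp [DopR, primeDerivR_one]
      rw [hD]
      simp only [Nat.cast_zero, mul_zero, pow_zero, one_mul, zpow_zero, eval_X]
      rw [div_one]
      have h := (hd1 x).deriv
      rw [h]
  · -- inductive case n ≥ 1
    have key1 : ∀ y, u n y = M₀ ^ (2 * n) * eval (J y) (Q n) / (u 0 y) ^ (2 * n - 1) := by
      intro y
      rw [hurec n hn y, hQrec n hn, eval_sum, Finset.mul_sum, Finset.sum_div]
      refine Finset.sum_congr rfl fun k hk => ?_
      rw [eval_sum, Finset.mul_sum, Finset.sum_div]
      refine Finset.sum_congr rfl fun s hs => ?_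
      obtain ⟨hk1, hkn⟩ := Finset.mem_Icc.mp hk
      have hsum : ∑ i, s i = n - k := Finset.Nat.mem_antidiagonalTuple.mp hs
      have hlt : ∀ i, s i < n := by
        intro i
        have h1 : s i ≤ ∑ j, s j :=
          Finset.single_le_sum (f := s) (fun _ _ => Nat.zero_le _) (Finset.mem_univ i)
        omega
      have hderiv : ∀ i : Fin (2 * k), deriv (u (s i)) y
          = M₀ ^ (2 * s i) * eval (J y) (DopR (2 * ((s i : ℕ) : ℝ) - 1) (Q (s i)))
            / (u 0 y) ^ (2 * s i) := by
        intro i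
        have hc : (u 0 y) ^ (2 * ((s i : ℕ) : ℤ)) = (u 0 y) ^ (2 * s i) := by
          rw [show (2 * ((s i : ℕ) : ℤ)) = ((2 * s i : ℕ) : ℤ) by push_cast; ring, zpow_natCast]
        rw [(IH (s i) (hlt i) y).2, hc]
      rw [Finset.prod_congr rfl fun i _ => hderiv i, Finset.prod_div_distrib,
        Finset.prod_mul_distrib, Finset.prod_pow_eq_pow_sum, Finset.prod_pow_eq_pow_sum,
        eval_mul, eval_C, eval_prod]
      have hsum2 : ∑ i, 2 * s i = 2 * (n - k) := by rw [← Finset.mul_sum, hsum]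
      rw [hsum2]
      have e1 : M₀ ^ (2 * n) = M₀ ^ (2 * k) * M₀ ^ (2 * (n - k)) := by
        rw [← pow_add]; congr 1; omega
      have e2 : (u 0 y) ^ (2 * n - 1) = (u 0 y) ^ (2 * k - 1) * (u 0 y) ^ (2 * (n - k)) := by
        rw [← pow_add]; congr 1; omega
      rw [e1, e2]
      field_simp
    intro x
    have hzconv : (u 0 x) ^ (2 * (n : ℤ) - 1) = (u 0 x) ^ (2 * n - 1 : ℕ) := by
      rw [show (2 * (n : ℤ) - 1) = ((2 * n - 1 : ℕ) : ℤ) by omega, zpow_natCast]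
    refine ⟨by rw [key1 x, hzconv], ?_⟩
    -- derivative part
    have key1' : u n = fun y =>
        M₀ ^ (2 * n) * (eval (J y) (Q n) * (u 0 y) ^ ((1 : ℤ) - 2 * n)) := by
      funext y
      rw [key1 y, div_eq_mul_inv, ← zpow_natCast (u 0 y), ← zpow_neg,
        show (-((2 * n - 1 : ℕ) : ℤ)) = (1 : ℤ) - 2 * n by omega, mul_assoc]
    have hzp : HasDerivAt (fun y => (u 0 y) ^ ((1 : ℤ) - 2 * n))
        ((((1 : ℤ) - 2 * n : ℤ) : ℝ) * (u 0 x) ^ ((1 : ℤ) - 2 * n - 1) * J x 1) x := by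
      exact (hasDerivAt_zpow ((1 : ℤ) - 2 * n) (u 0 x) (Or.inl (hvne x))).comp x (hd1 x)
    have hder : HasDerivAt (u n)
        (M₀ ^ (2 * n) * (eval (J x) (primeDerivR (Q n)) * (u 0 x) ^ ((1 : ℤ) - 2 * n)
          + eval (J x) (Q n) * ((((1 : ℤ) - 2 * n : ℤ) : ℝ) * (u 0 x) ^ ((1 : ℤ) - 2 * n - 1) * J x 1))) x := by
      rw [key1']
      exact ((hE (Q n) x).mul hzp).const_mul _
    rw [hder.deriv, eval_DopR]
    simp only [hJdef, iteratedDeriv_zero]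
    rw [div_eq_mul_inv, ← zpow_neg]
    have ea : (u 0 x) ^ ((1 : ℤ) - 2 * n) = u 0 x * (u 0 x) ^ (-(2 * (n : ℤ))) := by
      rw [show ((1 : ℤ) - 2 * n) = (-(2 * (n : ℤ))) + 1 by ring,
        zpow_add₀ (hvne x), zpow_one, mul_comm]
    have eb : (u 0 x) ^ ((1 : ℤ) - 2 * n - 1) = (u 0 x) ^ (-(2 * (n : ℤ))) := by
      congr 1; ring
    rw [ea, eb]
    push_cast
    ring
end
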